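/- arXiv:2001.07393 — 4 statements merged into one kernel-verified Lean document; each statement's English description precedes it below -/
import Mathlib

section
/- Let k > 1. If 1 ≤ τ₁, τ₂ ≤ N−1 and τ₁ ≡ τ₂ (mod 4(2^k+1)), then the autocorrelation values of the Yu-Gong sequence s satisfy AC_s(τ₁) = AC_s(τ₂). In particular, AC_s(4(2^k+1)i) = −4 for every i with 1 ≤ i ≤ 2^k − 2. -/
/-!
Cut the period `4W` into four blocks of length `W`. Because `a = (0,1,1,1)` has ideal
autocorrelation (`4` at shifts `≡ 0 (mod 4)`, `0` otherwise), column `j` contributes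
`4 (-1)^(b_j + b_{j+τ}) = 4 (-1)^Tr(α^j (1 + α^τ))` when its block shift matches, and nothing
otherwise. As `W ≡ -1` and `Q := 2^k + 1 ≡ 1 (mod 4)`, the matching condition is
`τ + δ ([Q ∣ j] - [Q ∣ j + τ]) ≡ 0 (mod 4)`.

For `c ≠ 0` the sum of `(-1)^Tr(x c)` over the nonzero `x`, i.e. over the powers of `α`, is `-1`;
so is the sum over the nonzero `x` of the subfield `𝔽_{2^k}`, i.e. over the powers of `α^Q`,
as soon as `c + c^(2^k) ≠ 0`, which for `c = 1 + α^t` means `Q ∤ t`. Splitting the columns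
according to `Q ∣ j` and `Q ∣ j + τ` gives `AC(τ) = -4·[4 ∣ τ]` if `Q ∣ τ` and
`AC(τ) = 4 ([4 ∣ τ] - [4 ∣ τ + δ] - [4 ∣ τ - δ])` otherwise. Both depend only on `τ mod 4Q`.
-/

open Finset Polynomial

def sign₂ (z : ZMod 2) : ℤ := if z = 0 then 1 else -1

lemma sign₂_add : ∀ x y : ZMod 2, sign₂ (x + y) = sign₂ x * sign₂ y := by decide

lemma sign₂_add_one : ∀ x : ZMod 2, sign₂ (x + 1) = -sign₂ x := by decide

lemma ite_eq_one_neg_one_eq_sign₂_add :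
    ∀ x y : ZMod 2, (if x = y then (1 : ℤ) else -1) = sign₂ (x + y) := by
  decide

lemma sum_range_mul_eq_sum_sum {M : Type*} [AddCommMonoid M] (f : ℕ → M) (m n : ℕ) :
    ∑ t ∈ range (m * n), f t = ∑ i ∈ range m, ∑ j ∈ range n, f (i * n + j) := by
  induction m with
  | zero => simp
  | succ m ih => rw [Nat.succ_mul, sum_range_add, ih, sum_range_succ]

lemma Function.Periodic.sum_range_add {M : Type*} [AddCancelCommMonoid M] {f : ℕ → M} {n : ℕ}
    (hf : Function.Periodic f n) (c : ℕ) :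
    ∑ j ∈ range n, f (j + c) = ∑ j ∈ range n, f j := by
  induction c with
  | zero => rfl
  | succ c ih =>
    rw [← ih]
    have h := (sum_range_succ' (fun j => f (j + c)) n).symm.trans (sum_range_succ _ n)
    simp only [zero_add, add_comm n c, hf c] at h
    simpa only [Nat.add_right_comm _ 1 c, add_assoc] using add_right_cancel h

lemma sum_sign₂_eq_zero_of_add_mem_iff {G : Type*} [AddCommGroup G] (s : Finset G)
    (ψ : G →+ ZMod 2) {x₀ : G} (hs : ∀ x, x + x₀ ∈ s ↔ x ∈ s) (hx₀ : ψ x₀ ≠ 0) :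
    ∑ x ∈ s, sign₂ (ψ x) = 0 := by
  have hψ : ψ x₀ = 1 := (by decide : ∀ z : ZMod 2, z ≠ 0 → z = 1) _ hx₀
  have h : ∑ x ∈ s, sign₂ (ψ (x + x₀)) = ∑ x ∈ s, sign₂ (ψ x) :=
    sum_equiv (Equiv.addRight x₀) (fun x => (hs x).symm) (fun _ _ => rfl)
  simp only [map_add, hψ, sign₂_add_one, sum_neg_distrib] at h
  omega

lemma IsPrimitiveRoot.sum_range_pow_eq_sum_nthRootsFinset {R M : Type*} [CommRing R] [IsDomain R]
    [AddCommMonoid M] {ζ : R} {n : ℕ} (hζ : IsPrimitiveRoot ζ n) (f : R → M) :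
    ∑ i ∈ range n, f (ζ ^ i) = ∑ x ∈ nthRootsFinset n (1 : R), f x := by
  rcases Nat.eq_zero_or_pos n with rfl | hn
  · simp
  classical
  rw [← sum_image hζ.injOn_pow]
  congr 1
  refine eq_of_subset_of_card_le (fun x hx => ?_) ?_
  · obtain ⟨i, -, rfl⟩ := mem_image.1 hx
    rw [Polynomial.mem_nthRootsFinset hn, ← pow_mul, mul_comm, pow_mul, hζ.pow_eq_one, one_pow]
  · rw [hζ.card_nthRootsFinset, card_image_of_injOn hζ.injOn_pow, card_range]

lemma mem_insert_zero_nthRootsFinset {R : Type*} [CommRing R] [IsDomain R] [DecidableEq R]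
    {n : ℕ} (hn : 0 < n) {x : R} :
    x ∈ insert 0 (nthRootsFinset n (1 : R)) ↔ x ^ (n + 1) = x := by
  rw [mem_insert, mem_nthRootsFinset hn, pow_succ]
  by_cases hx : x = 0
  · simp [hx]
  · simp [hx, mul_eq_right₀]

lemma Algebra.trace_pow_card_pow (K L : Type*) [Field K] [Fintype K] [Field L] [Finite L]
    [Algebra K L] (n : ℕ) (z : L) :
    Algebra.trace K L (z ^ (Fintype.card K ^ n)) = Algebra.trace K L z := by
  have : Module.Finite K L := Module.Finite.of_finite
  have h := Algebra.trace_eq_of_algEquiv (FiniteField.frobeniusAlgEquivOfAlgebraic K L ^ n) z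
  rwa [AlgEquiv.coe_pow, FiniteField.coe_frobeniusAlgEquivOfAlgebraic_iterate] at h

lemma exists_trace_mul_ne_zero (K L : Type*) [Field K] [Fintype K] [Field L] [Finite L]
    [Algebra K L] {c : L} (hc : c ≠ 0) : ∃ x, Algebra.trace K L (x * c) ≠ 0 := by
  have : Module.Finite K L := Module.Finite.of_finite
  by_contra! h
  exact hc <| (traceForm_nondegenerate K L).1 c fun x => by
    rw [Algebra.traceForm_apply, mul_comm]; exact h x

lemma two_pow_eq_zero_zmod4 {n : ℕ} (hn : 2 ≤ n) : (2 : ZMod 4) ^ n = 0 := by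
  obtain ⟨m, rfl⟩ := Nat.exists_eq_add_of_le hn
  rw [pow_add, show (2 : ZMod 4) ^ 2 = 0 by decide, zero_mul]

lemma cast_two_pow_sub_one_zmod4 {n : ℕ} (hn : 2 ≤ n) : ((2 ^ n - 1 : ℕ) : ZMod 4) = -1 := by
  rw [Nat.cast_sub Nat.one_le_two_pow, Nat.cast_pow, Nat.cast_ofNat, two_pow_eq_zero_zmod4 hn,
    Nat.cast_one, zero_sub]

lemma two_pow_two_mul_sub_one (k : ℕ) : 2 ^ (2 * k) - 1 = (2 ^ k + 1) * (2 ^ k - 1) := by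
  rw [mul_comm, pow_mul, ← Nat.sq_sub_sq, one_pow]


lemma dvd_of_pow_pow_two_pow_eq {R : Type*} [CommRing R] [IsDomain R] {k : ℕ} {α : R}
    (hk : 0 < k) (hα : IsPrimitiveRoot α (2 ^ (2 * k) - 1)) {t : ℕ}
    (h : (α ^ t) ^ 2 ^ k = α ^ t) : 2 ^ k + 1 ∣ t := by
  have hP : 0 < 2 ^ k - 1 := Nat.sub_pos_of_lt (Nat.one_lt_two_pow hk.ne')
  have hne : α ^ t ≠ 0 :=
    pow_ne_zero _ (hα.ne_zero (Nat.sub_pos_of_lt (Nat.one_lt_two_pow (by omega))).ne')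
  have h1 : α ^ (t * (2 ^ k - 1)) = 1 := by
    refine mul_right_cancel₀ hne ?_
    rw [pow_mul, ← pow_succ, Nat.sub_add_cancel Nat.one_le_two_pow, h, one_mul]
  rw [hα.pow_eq_one_iff_dvd, two_pow_two_mul_sub_one] at h1
  exact Nat.dvd_of_mul_dvd_mul_right hP h1

section CharTwo

variable {F : Type*} [Field F] [Algebra (ZMod 2) F] [CharP F 2]

lemma IsPrimitiveRoot.sum_range_sign₂_trace_mul {m : ℕ} (hm : 0 < m) {ζ : F}
    (hζ : IsPrimitiveRoot ζ (2 ^ m - 1)) {c x₀ : F} (hx₀ : x₀ ^ 2 ^ m = x₀)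
    (hc : Algebra.trace (ZMod 2) F (x₀ * c) ≠ 0) :
    ∑ i ∈ range (2 ^ m - 1), sign₂ (Algebra.trace (ZMod 2) F (ζ ^ i * c)) = -1 := by
  classical
  have hpos : 0 < 2 ^ m - 1 := Nat.sub_pos_of_lt (Nat.one_lt_two_pow hm.ne')
  set H := insert 0 (nthRootsFinset (2 ^ m - 1) (1 : F))
  have hH : ∀ x, x ∈ H ↔ x ^ 2 ^ m = x := fun x => by
    rw [mem_insert_zero_nthRootsFinset hpos, Nat.sub_add_cancel Nat.one_le_two_pow]
  have hsum : ∑ x ∈ H, sign₂ (Algebra.trace (ZMod 2) F (x * c)) = 0 :=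
    sum_sign₂_eq_zero_of_add_mem_iff H
      ((Algebra.trace (ZMod 2) F).toAddMonoidHom.comp (AddMonoidHom.mulRight c))
      (fun x => by rw [hH, hH, add_pow_char_pow, hx₀, add_left_inj]) hc
  rw [sum_insert fun h => ne_zero_of_mem_nthRootsFinset one_ne_zero h rfl, zero_mul,
    map_zero] at hsum
  rw [hζ.sum_range_pow_eq_sum_nthRootsFinset fun x => sign₂ (Algebra.trace (ZMod 2) F (x * c))]
  linarith [show sign₂ 0 = 1 from rfl]

lemma exists_pow_eq_self_trace_mul_ne_zero [Fintype F] {k : ℕ}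
    (hF : Fintype.card F = 2 ^ (2 * k)) {c : F} (hc : c + c ^ 2 ^ k ≠ 0) :
    ∃ x : F, x ^ 2 ^ k = x ∧ Algebra.trace (ZMod 2) F (x * c) ≠ 0 := by
  -- Otherwise, as every `y + y ^ 2 ^ k` is fixed by `x ↦ x ^ 2 ^ k`,
  -- `Tr (y * (c + c ^ 2 ^ k)) = 0` for all `y`.
  by_contra! h
  obtain ⟨y, hy⟩ := exists_trace_mul_ne_zero (ZMod 2) F hc
  have hq : ∀ z : F, (z ^ 2 ^ k) ^ 2 ^ k = z := fun z => by
    rw [← pow_mul, ← pow_add, ← two_mul, ← hF, FiniteField.pow_card]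
  have h1 := h (y + y ^ 2 ^ k) (by rw [add_pow_char_pow, hq, add_comm])
  have h2 : Algebra.trace (ZMod 2) F (y ^ 2 ^ k * c) =
      Algebra.trace (ZMod 2) F (y * c ^ 2 ^ k) := by
    rw [← Algebra.trace_pow_card_pow (ZMod 2) F k (y * c ^ 2 ^ k), ZMod.card, mul_pow, hq]
  rw [add_mul, map_add, h2, ← map_add, ← mul_add] at h1
  exact hy h1

end CharTwo

def indZero (x : ZMod 4) : ℤ := if x = 0 then 1 else 0

lemma indZero_add_mul_ite_sub_ite (x δ : ZMod 4) {p q : Prop} [Decidable p] [Decidable q]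
    (hpq : ¬ (p ∧ q)) :
    indZero (x + δ * ((if p then 1 else 0) - if q then 1 else 0)) =
      indZero x + (indZero (x + δ) - indZero x) * (if p then 1 else 0) +
        (indZero (x - δ) - indZero x) * (if q then 1 else 0) := by
  by_cases hp : p <;> by_cases hq : q <;> simp_all [sub_eq_add_neg]

section PrimitiveElement

variable {F : Type*} [Field F] [Fintype F] [Algebra (ZMod 2) F] [CharP F 2] {k : ℕ} {α : F}

lemma sum_sign₂_trace_pow_mul_one_add_pow (hF : Fintype.card F = 2 ^ (2 * k)) (hk : 0 < k)
    (hα : IsPrimitiveRoot α (2 ^ (2 * k) - 1)) {t : ℕ} (ht : ¬ 2 ^ (2 * k) - 1 ∣ t) :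
    ∑ j ∈ range (2 ^ (2 * k) - 1), sign₂ (Algebra.trace (ZMod 2) F (α ^ j * (1 + α ^ t))) = -1 := by
  have hc : 1 + α ^ t ≠ 0 := fun h =>
    ht ((hα.pow_eq_one_iff_dvd t).1 (CharTwo.add_eq_zero.1 h).symm)
  obtain ⟨x₀, hx₀⟩ := exists_trace_mul_ne_zero (ZMod 2) F hc
  exact hα.sum_range_sign₂_trace_mul (m := 2 * k) (by omega) (hF ▸ FiniteField.pow_card x₀) hx₀

lemma sum_dvd_sign₂_trace_pow_mul_one_add_pow (hF : Fintype.card F = 2 ^ (2 * k)) (hk : 0 < k)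
    (hα : IsPrimitiveRoot α (2 ^ (2 * k) - 1)) {t : ℕ} (ht : ¬ 2 ^ k + 1 ∣ t) :
    ∑ j ∈ range (2 ^ (2 * k) - 1), (if 2 ^ k + 1 ∣ j then 1 else 0) *
      sign₂ (Algebra.trace (ZMod 2) F (α ^ j * (1 + α ^ t))) = -1 := by
  have hβ : IsPrimitiveRoot (α ^ (2 ^ k + 1)) (2 ^ k - 1) :=
    hα.pow (Nat.sub_pos_of_lt (Nat.one_lt_two_pow (by omega))) (two_pow_two_mul_sub_one k)
  have hc : (1 + α ^ t) + (1 + α ^ t) ^ 2 ^ k ≠ 0 := by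
    rw [add_pow_char_pow, one_pow, add_add_add_comm, CharTwo.add_self_eq_zero, zero_add]
    exact fun h => ht (dvd_of_pow_pow_two_pow_eq hk hα (CharTwo.add_eq_zero.1 h).symm)
  obtain ⟨x₀, hx₀, hx₀c⟩ := exists_pow_eq_self_trace_mul_ne_zero hF hc
  rw [← hβ.sum_range_sign₂_trace_mul hk hx₀ hx₀c, two_pow_two_mul_sub_one, mul_comm,
    sum_range_mul_eq_sum_sum]
  refine sum_congr rfl fun m _ => ?_
  rw [sum_eq_single 0, add_zero, if_pos (dvd_mul_left _ _), one_mul, ← pow_mul, mul_comm m]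
  · intro r hr hr0
    rw [if_neg, zero_mul]
    exact fun h => hr0 (Nat.eq_zero_of_dvd_of_lt ((Nat.dvd_add_right (dvd_mul_left _ m)).1 h)
      (mem_range.1 hr))
  · exact fun h => absurd (mem_range.2 (Nat.succ_pos _)) h

lemma sum_dvd_add_sign₂_trace_pow_mul_one_add_pow (hF : Fintype.card F = 2 ^ (2 * k))
    (hk : 0 < k) (hα : IsPrimitiveRoot α (2 ^ (2 * k) - 1)) {τ : ℕ} (hτ : ¬ 2 ^ k + 1 ∣ τ) :
    ∑ j ∈ range (2 ^ (2 * k) - 1), (if 2 ^ k + 1 ∣ j + τ then 1 else 0) *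
      sign₂ (Algebra.trace (ZMod 2) F (α ^ j * (1 + α ^ τ))) = -1 := by
  set W := 2 ^ (2 * k) - 1
  have hQW : 2 ^ k + 1 ∣ W := ⟨_, two_pow_two_mul_sub_one k⟩
  have hW1 : 1 ≤ W := by
    have := Nat.one_lt_two_pow (n := 2 * k) (by omega)
    omega
  have hWτ : (W - 1) * τ + τ = W * τ := by
    rw [← Nat.succ_mul, Nat.succ_eq_add_one, Nat.sub_add_cancel hW1]
  -- `(W - 1) * τ ≡ -τ (mod W)`: shifting `j` by `τ` turns `Q ∣ j + τ` into `Q ∣ j`.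
  have hc : ¬ 2 ^ k + 1 ∣ (W - 1) * τ := fun h =>
    hτ ((Nat.dvd_add_right h).1 (hWτ ▸ dvd_mul_of_dvd_left hQW τ))
  have hper : Function.Periodic (fun j => (if 2 ^ k + 1 ∣ j then (1 : ℤ) else 0) *
      sign₂ (Algebra.trace (ZMod 2) F (α ^ j * (1 + α ^ ((W - 1) * τ))))) W := fun j => by
    simp only [Nat.dvd_add_left hQW, pow_add, hα.pow_eq_one, mul_one]
  have hshift : ∀ j, α ^ (j + τ) * (1 + α ^ ((W - 1) * τ)) = α ^ j * (1 + α ^ τ) := fun j => by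
    rw [mul_add, mul_one, ← pow_add, add_assoc, add_comm τ, hWτ, pow_add α j (W * τ), pow_mul,
      hα.pow_eq_one, one_pow, mul_one, pow_add]
    ring
  rw [← sum_dvd_sign₂_trace_pow_mul_one_add_pow hF hk hα hc, ← hper.sum_range_add τ]
  simp only [hshift]

lemma sum_indZero_mul_sign₂_trace (hF : Fintype.card F = 2 ^ (2 * k)) (hk : 0 < k)
    (hα : IsPrimitiveRoot α (2 ^ (2 * k) - 1)) (δ : ZMod 4) {τ : ℕ} (hτ0 : 0 < τ)
    (hτ : τ < 4 * (2 ^ (2 * k) - 1)) :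
    ∑ j ∈ range (2 ^ (2 * k) - 1),
      indZero (τ + δ * ((if 2 ^ k + 1 ∣ j then 1 else 0) - if 2 ^ k + 1 ∣ j + τ then 1 else 0)) *
        sign₂ (Algebra.trace (ZMod 2) F (α ^ j * (1 + α ^ τ))) =
      if 2 ^ k + 1 ∣ τ then -indZero τ else indZero τ - indZero (τ + δ) - indZero (τ - δ) := by
  have hQW : 2 ^ k + 1 ∣ 2 ^ (2 * k) - 1 := ⟨_, two_pow_two_mul_sub_one k⟩
  split_ifs with hQ
  · simp only [Nat.dvd_add_left hQ, sub_self, mul_zero, add_zero, ← mul_sum]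
    by_cases h4 : (τ : ZMod 4) = 0
    · have hW : ¬ 2 ^ (2 * k) - 1 ∣ τ := by
        rintro ⟨m, rfl⟩
        have hm0 : 0 < m := Nat.pos_of_ne_zero (by rintro rfl; simp at hτ0)
        have hm : m < 4 := lt_of_mul_lt_mul_left (hτ.trans_eq (mul_comm _ _)) (Nat.zero_le _)
        rw [Nat.cast_mul, cast_two_pow_sub_one_zmod4 (by omega)] at h4
        interval_cases m <;> revert h4 <;> decide
      rw [sum_sign₂_trace_pow_mul_one_add_pow hF hk hα hW]
      simp [indZero, h4]
    · simp [indZero, h4]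
  · have hpq : ∀ j, ¬ (2 ^ k + 1 ∣ j ∧ 2 ^ k + 1 ∣ j + τ) := fun j h =>
      hQ ((Nat.dvd_add_right h.1).1 h.2)
    simp only [indZero_add_mul_ite_sub_ite _ _ (hpq _), add_mul, mul_assoc, sum_add_distrib,
      ← mul_sum]
    rw [sum_sign₂_trace_pow_mul_one_add_pow hF hk hα fun h => hQ (hQW.trans h),
      sum_dvd_sign₂_trace_pow_mul_one_add_pow hF hk hα hQ,
      sum_dvd_add_sign₂_trace_pow_mul_one_add_pow hF hk hα hQ]
    ring

end PrimitiveElement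

-- The sequence `a = (0, 1, 1, 1)`, indexed by `ZMod 4`.
def yuGongBase (x : ZMod 4) : ZMod 2 := if x = 0 then 0 else 1

lemma yuGongBase_intCast (x : ℤ) : yuGongBase x = if x % 4 = 0 then 0 else 1 := by
  simp only [yuGongBase, ZMod.intCast_zmod_eq_zero_iff_dvd, Nat.cast_ofNat,
    Int.dvd_iff_emod_eq_zero]

lemma sum_sign₂_yuGongBase : ∀ A C : ZMod 4,
    ∑ i ∈ range 4, sign₂ (yuGongBase (i + A) + yuGongBase (i + C)) = if A = C then 4 else 0 := by
  decide

lemma sum_sign₂_interleaved {W : ℕ} (hW : 0 < W) (e : ℕ → ℤ) (b s : ℕ → ZMod 2)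
    (hs : ∀ i j : ℕ, i ≤ 3 → j ≤ W - 1 →
      s (i * W + j) = (if ((i : ℤ) + e j) % 4 = 0 then 0 else 1) + b j) (τ : ℕ) :
    ∑ t ∈ range (4 * W), sign₂ (s t + s ((t + τ) % (4 * W))) =
      ∑ j ∈ range W, sign₂ (b j + b ((j + τ) % W)) *
        if (e j : ZMod 4) = ((j + τ) / W : ℕ) + e ((j + τ) % W) then 4 else 0 := by
  have hs' : ∀ y < 4 * W, s y = yuGongBase (((y / W : ℕ) + e (y % W) : ℤ)) + b (y % W) := by
    intro y hy
    have hdiv := Nat.div_lt_of_lt_mul (mul_comm 4 W ▸ hy)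
    have hmod := Nat.mod_lt y hW
    rw [← Nat.div_add_mod' y W, hs _ _ (by omega) (by omega), Nat.div_add_mod', yuGongBase_intCast]
  have hterm : ∀ t < 4 * W, sign₂ (s t + s ((t + τ) % (4 * W))) =
      sign₂ (yuGongBase ((t / W : ℕ) + e (t % W)) +
        yuGongBase (((t + τ) / W : ℕ) + e ((t + τ) % W))) *
      sign₂ (b (t % W) + b ((t + τ) % W)) := by
    intro t ht
    rw [hs' t ht, hs' _ (Nat.mod_lt _ (by omega)), Nat.mod_mod_of_dvd _ (dvd_mul_left W 4),
      mul_comm 4 W, Nat.mod_mul_right_div_self, ← sign₂_add, add_add_add_comm]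
    simp only [Int.cast_add, Int.cast_natCast, ZMod.natCast_mod]
  rw [sum_congr rfl fun t ht => hterm t (mem_range.1 ht), sum_range_mul_eq_sum_sum, sum_comm]
  refine sum_congr rfl fun j hj => ?_
  have hj := mem_range.1 hj
  have hdiv : ∀ i n, (n + i * W) / W = n / W + i := fun i n => Nat.add_mul_div_right _ _ hW
  have hmod : ∀ i n, (n + i * W) % W = n % W := fun i n => Nat.add_mul_mod_self_right _ _ _
  have hcomm : ∀ i, i * W + j = j + i * W := fun i => add_comm _ _
  have hshift : ∀ i, j + i * W + τ = j + τ + i * W := fun i => add_right_comm _ _ _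
  simp only [hcomm, hshift, hdiv, hmod, Nat.div_eq_of_lt hj, Nat.mod_eq_of_lt hj, zero_add]
  rw [← sum_mul, mul_comm, ← sum_sign₂_yuGongBase]
  refine congrArg _ (sum_congr rfl fun i _ => ?_)
  push_cast
  ring_nf

lemma yuGongShift_cast {k : ℕ} (hk : 1 < k) {δ : ℤ} {e : ℕ → ℤ}
    (he : ∀ i r : ℕ, i ≤ 2 ^ k - 2 → r ≤ 2 ^ k →
      e ((2 ^ k + 1) * i + r) =
        if r = 0 then (3 * (i : ℤ) + δ) % 4 else (3 * ((i : ℤ) + (r : ℤ))) % 4)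
    {j : ℕ} (hj : j < 2 ^ (2 * k) - 1) :
    (e j : ZMod 4) = δ * (if 2 ^ k + 1 ∣ j then 1 else 0) - j := by
  have hQ : 0 < 2 ^ k + 1 := Nat.succ_pos _
  have hi : j / (2 ^ k + 1) ≤ 2 ^ k - 2 := by
    rw [two_pow_two_mul_sub_one] at hj
    have := Nat.div_lt_of_lt_mul hj
    omega
  have hr : j % (2 ^ k + 1) ≤ 2 ^ k := Nat.lt_succ_iff.1 (Nat.mod_lt j hQ)
  have hej := he _ _ hi hr
  rw [Nat.div_add_mod] at hej
  have hcast : (j : ZMod 4) = (j / (2 ^ k + 1) : ℕ) + (j % (2 ^ k + 1) : ℕ) := by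
    conv_lhs => rw [← Nat.div_add_mod j (2 ^ k + 1)]
    push_cast
    rw [two_pow_eq_zero_zmod4 hk, zero_add, one_mul]
  have hmod : ∀ x : ℤ, ((x % 4 : ℤ) : ZMod 4) = x := fun x => by
    simpa using ZMod.intCast_mod x 4
  have h4 : (4 : ZMod 4) = 0 := by decide
  rw [hej]
  simp only [Nat.dvd_iff_mod_eq_zero]
  generalize j / (2 ^ k + 1) = i at hcast ⊢
  generalize j % (2 ^ k + 1) = r at hcast ⊢
  split_ifs with hr0
  · subst hr0
    push_cast [hmod] at hcast ⊢
    linear_combination hcast + (i : ZMod 4) * h4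
  · push_cast [hmod]
    linear_combination hcast + ((i : ZMod 4) + r) * h4

lemma yuGongShift_eq_iff {k : ℕ} (hk : 1 < k) {δ : ℤ} {e : ℕ → ℤ}
    (he : ∀ i r : ℕ, i ≤ 2 ^ k - 2 → r ≤ 2 ^ k →
      e ((2 ^ k + 1) * i + r) =
        if r = 0 then (3 * (i : ℤ) + δ) % 4 else (3 * ((i : ℤ) + (r : ℤ))) % 4)
    {j : ℕ} (hj : j < 2 ^ (2 * k) - 1) (τ : ℕ) :
    (e j : ZMod 4) = ((j + τ) / (2 ^ (2 * k) - 1) : ℕ) + e ((j + τ) % (2 ^ (2 * k) - 1)) ↔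
      (τ : ZMod 4) + δ * ((if 2 ^ k + 1 ∣ j then 1 else 0) - if 2 ^ k + 1 ∣ j + τ then 1 else 0)
        = 0 := by
  have hcast : (j : ZMod 4) + τ = -((j + τ) / (2 ^ (2 * k) - 1) : ℕ) +
      ((j + τ) % (2 ^ (2 * k) - 1) : ℕ) := by
    rw [← Nat.cast_add]
    conv_lhs => rw [← Nat.div_add_mod (j + τ) (2 ^ (2 * k) - 1)]
    rw [Nat.cast_add, Nat.cast_mul, cast_two_pow_sub_one_zmod4 (by omega)]
    ring
  rw [yuGongShift_cast hk he hj, yuGongShift_cast hk he (Nat.mod_lt _ (by omega)),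
    ← sub_eq_zero]
  simp only [Nat.dvd_mod_iff ⟨_, two_pow_two_mul_sub_one k⟩]
  constructor <;> intro h
  · linear_combination h + hcast
  · linear_combination h - hcast

lemma autocorr_eq_four_mul_sum {k : ℕ} (hk : 1 < k) {δ : ℤ} {W N : ℕ}
    (hW : W = 2 ^ (2 * k) - 1) (hN : N = 4 * W) {F : Type*} [Field F] [Algebra (ZMod 2) F]
    {α : F} (hα : orderOf α = 2 ^ (2 * k) - 1) {b : ℕ → ZMod 2}
    (hb : ∀ j, b j = Algebra.trace (ZMod 2) F (α ^ j)) {e : ℕ → ℤ}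
    (he : ∀ i r : ℕ, i ≤ 2 ^ k - 2 → r ≤ 2 ^ k →
      e ((2 ^ k + 1) * i + r) =
        if r = 0 then (3 * (i : ℤ) + δ) % 4 else (3 * ((i : ℤ) + (r : ℤ))) % 4)
    {s : ℕ → ZMod 2}
    (hs : ∀ i j : ℕ, i ≤ 3 → j ≤ W - 1 →
      s (i * W + j) = (if ((i : ℤ) + e j) % 4 = 0 then 0 else 1) + b j)
    {AC : ℕ → ℤ}
    (hAC : ∀ τ, AC τ = ∑ t ∈ Finset.range N, if s t = s ((t + τ) % N) then (1 : ℤ) else -1)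
    (τ : ℕ) :
    AC τ = 4 * ∑ j ∈ range W,
      indZero (τ + δ * ((if 2 ^ k + 1 ∣ j then 1 else 0) - if 2 ^ k + 1 ∣ j + τ then 1 else 0)) *
        sign₂ (Algebra.trace (ZMod 2) F (α ^ j * (1 + α ^ τ))) := by
  subst hW hN
  have hW0 : 0 < 2 ^ (2 * k) - 1 := Nat.sub_pos_of_lt (Nat.one_lt_two_pow (by omega))
  simp only [hAC, ite_eq_one_neg_one_eq_sign₂_add]
  rw [sum_sign₂_interleaved hW0 e b s hs τ, mul_sum]
  refine sum_congr rfl fun j hj => ?_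
  have hb' : b j + b ((j + τ) % (2 ^ (2 * k) - 1)) =
      Algebra.trace (ZMod 2) F (α ^ j * (1 + α ^ τ)) := by
    rw [hb, hb, ← hα, pow_mod_orderOf, mul_add, mul_one, ← pow_add, map_add]
  simp only [hb', yuGongShift_eq_iff hk he (mem_range.1 hj) τ, indZero]
  split_ifs <;> ring

theorem stmt1_general
    (k : ℕ) (hk : 1 < k)
    (δ : ℤ)
    (W N : ℕ) (hW : W = 2 ^ (2 * k) - 1) (hN : N = 4 * W)
    (F : Type) [Field F] [Fintype F] [Algebra (ZMod 2) F]
    (hF : Fintype.card F = 2 ^ (2 * k))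
    (α : F) (hα : orderOf α = 2 ^ (2 * k) - 1)
    (b : ℕ → ZMod 2) (hb : ∀ j, b j = Algebra.trace (ZMod 2) F (α ^ j))
    (e : ℕ → ℤ)
    (he : ∀ i r : ℕ, i ≤ 2 ^ k - 2 → r ≤ 2 ^ k →
      e ((2 ^ k + 1) * i + r) =
        if r = 0 then (3 * (i : ℤ) + δ) % 4 else (3 * ((i : ℤ) + (r : ℤ))) % 4)
    (s : ℕ → ZMod 2)
    (hs : ∀ i j : ℕ, i ≤ 3 → j ≤ W - 1 →
      s (i * W + j) = (if ((i : ℤ) + e j) % 4 = 0 then 0 else 1) + b j)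
    (AC : ℕ → ℤ)
    (hAC : ∀ τ, AC τ = ∑ t ∈ Finset.range N, if s t = s ((t + τ) % N) then (1 : ℤ) else -1)
    :
    (∀ τ₁ τ₂ : ℕ, 1 ≤ τ₁ → τ₁ ≤ N - 1 → 1 ≤ τ₂ → τ₂ ≤ N - 1 →
      τ₁ % (4 * (2 ^ k + 1)) = τ₂ % (4 * (2 ^ k + 1)) → AC τ₁ = AC τ₂) ∧
    (∀ i : ℕ, 1 ≤ i → i ≤ 2 ^ k - 2 → AC (4 * (2 ^ k + 1) * i) = -4) := by
  have : CharP F 2 := charP_of_injective_algebraMap' (ZMod 2) 2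
  have hAC' : ∀ τ, 0 < τ → τ < N → AC τ = if 2 ^ k + 1 ∣ τ then -4 * indZero τ
      else 4 * (indZero τ - indZero (τ + δ) - indZero (τ - δ)) := fun τ hτ0 hτN => by
    rw [autocorr_eq_four_mul_sum hk hW hN hα hb he hs hAC, hW,
      sum_indZero_mul_sign₂_trace hF (by omega) (hα ▸ IsPrimitiveRoot.orderOf α) _ hτ0 (by omega)]
    split_ifs <;> ring
  refine ⟨fun τ₁ τ₂ h₁ h₁' h₂ h₂' hmod => ?_, fun i hi hi' => ?_⟩
  · have h4 : (τ₁ : ZMod 4) = τ₂ := by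
      rw [ZMod.natCast_eq_natCast_iff' _ _ 4, ← Nat.mod_mod_of_dvd τ₁ (dvd_mul_right 4 _), hmod,
        Nat.mod_mod_of_dvd τ₂ (dvd_mul_right 4 _)]
    have hQ : 2 ^ k + 1 ∣ τ₁ ↔ 2 ^ k + 1 ∣ τ₂ := by
      rw [← Nat.dvd_mod_iff (dvd_mul_left _ 4), hmod, Nat.dvd_mod_iff (dvd_mul_left _ 4)]
    rw [hAC' τ₁ (by omega) (by omega), hAC' τ₂ (by omega) (by omega), h4]
    simp only [hQ]
  · have hlt : (2 ^ k + 1) * i < (2 ^ k + 1) * (2 ^ k - 1) :=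
      Nat.mul_lt_mul_of_pos_left (by omega) (Nat.succ_pos _)
    rw [hAC' _ (by positivity) (by rw [hN, hW, two_pow_two_mul_sub_one, mul_assoc]; omega),
      if_pos ⟨4 * i, by ring⟩, indZero,
      if_pos ((ZMod.natCast_eq_zero_iff _ 4).2 (dvd_mul_of_dvd_left (dvd_mul_right 4 _) i))]
    rfl

theorem stmt1
    (k : ℕ) (hk : 1 < k)
    (δ : ℤ) (hδ : δ = 1 ∨ δ = -1)
    (W N : ℕ) (hW : W = 2 ^ (2 * k) - 1) (hN : N = 4 * W)
    (F : Type) [Field F] [Fintype F] [Algebra (ZMod 2) F]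
    (hF : Fintype.card F = 2 ^ (2 * k))
    (α : F) (hα : orderOf α = 2 ^ (2 * k) - 1)
    (b : ℕ → ZMod 2) (hb : ∀ j, b j = Algebra.trace (ZMod 2) F (α ^ j))
    (e : ℕ → ℤ)
    (he : ∀ i r : ℕ, i ≤ 2 ^ k - 2 → r ≤ 2 ^ k →
      e ((2 ^ k + 1) * i + r) =
        if r = 0 then (3 * (i : ℤ) + δ) % 4 else (3 * ((i : ℤ) + (r : ℤ))) % 4)
    (s : ℕ → ZMod 2)
    (hs : ∀ i j : ℕ, i ≤ 3 → j ≤ W - 1 →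
      s (i * W + j) = (if ((i : ℤ) + e j) % 4 = 0 then 0 else 1) + b j)
    (AC : ℕ → ℤ)
    (hAC : ∀ τ, AC τ = ∑ t ∈ Finset.range N, if s t = s ((t + τ) % N) then (1 : ℤ) else -1)
    :
    (∀ τ₁ τ₂ : ℕ, 1 ≤ τ₁ → τ₁ ≤ N - 1 → 1 ≤ τ₂ → τ₂ ≤ N - 1 →
      τ₁ % (4 * (2 ^ k + 1)) = τ₂ % (4 * (2 ^ k + 1)) → AC τ₁ = AC τ₂) ∧
    (∀ i : ℕ, 1 ≤ i → i ≤ 2 ^ k - 2 → AC (4 * (2 ^ k + 1) * i) = -4) :=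
  stmt1_general k hk δ W N hW hN F hF α hα b hb e he s hs AC hAC
end

section
/- Let k be a positive integer. If k ≡ 0 (mod 4) and 2^{2k−1} − 2^k + 1 is a prime, then gcd(2^{2k−1} − 2^k + 1, (2^{2(2^k+1)} + 1)/5) = 1; otherwise gcd(2^{2k−1} − 2^k + 1, (2^{2(2^k+1)} + 1)/5) < 2^{2k−1}. -/
private lemma aux_four (d m : ℕ) (_hm : 7 ≤ m) (h4 : d ∣ 4 * m) (h2 : ¬ d ∣ 2 * m)
    (_hmo : Odd m) : ∃ e, d = 4 * e ∧ e ∣ m := by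
  obtain ⟨c, hc⟩ := h4
  rcases Nat.even_or_odd c with hce | hco
  · obtain ⟨c', rfl⟩ := hce
    have hc' : 4 * m = 2 * (d * c') := by rw [hc]; ring
    exact absurd ⟨c', by omega⟩ h2
  · have hcop : Nat.Coprime 4 c := by
      have := (Nat.coprime_two_left.mpr hco).pow_left 2
      simpa using this
    have h4d : 4 ∣ d := hcop.dvd_of_dvd_mul_right ⟨m, by omega⟩
    obtain ⟨e, rfl⟩ := h4d
    have hc' : 4 * m = 4 * (e * c) := by rw [hc]; ring
    exact ⟨e, rfl, ⟨c, by omega⟩⟩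

theorem stmt6 (k : ℕ) (hk : 0 < k) :
    (k % 4 = 0 ∧ Nat.Prime (2 ^ (2 * k - 1) - 2 ^ k + 1) →
      Nat.gcd (2 ^ (2 * k - 1) - 2 ^ k + 1) ((2 ^ (2 * (2 ^ k + 1)) + 1) / 5) = 1) ∧
    (¬ (k % 4 = 0 ∧ Nat.Prime (2 ^ (2 * k - 1) - 2 ^ k + 1)) →
      Nat.gcd (2 ^ (2 * k - 1) - 2 ^ k + 1) ((2 ^ (2 * (2 ^ k + 1)) + 1) / 5) < 2 ^ (2 * k - 1)) := by
  have hpk : 2 ^ k ≤ 2 ^ (2 * k - 1) := Nat.pow_le_pow_right (by norm_num) (by omega)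
  have h2k : (2:ℕ) ≤ 2 ^ k := by
    have : (2:ℕ) ^ 1 ≤ 2 ^ k := Nat.pow_le_pow_right (by norm_num) hk
    simpa using this
  have h2k4 : k % 4 = 0 → 0 < k → (16:ℕ) ≤ 2 ^ k := fun h1 h2 => by
    have : (2:ℕ) ^ 4 ≤ 2 ^ k := Nat.pow_le_pow_right (by norm_num) (by omega)
    simpa using this
  constructor
  · rintro ⟨hk4, hp⟩
    have hk4' : 4 ≤ k := by omega
    set N := 2 ^ (2 * k - 1) - 2 ^ k + 1 with hN
    set M := (2 ^ (2 * (2 ^ k + 1)) + 1) / 5 with hM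
    -- size facts
    have hpk1 : 2 ^ (k + 1) ≤ 2 ^ (2 * k - 1) := Nat.pow_le_pow_right (by norm_num) (by omega)
    have hpk1' : (2:ℕ) ^ (k + 1) = 2 * 2 ^ k := by rw [pow_succ]; ring
    have hN2 : 2 < N := by omega
    have h16 : (16:ℕ) ≤ 2 ^ k := h2k4 hk4 hk
    rcases Nat.coprime_or_dvd_of_prime hp M with hco | hMd
    · exact hco
    exfalso
    -- Aurifeuillian divisibility: N ∣ 2^(4k-2)+1
    have hdvdAur : N ∣ 2 ^ (4 * k - 2) + 1 := by
      obtain ⟨j, rfl⟩ : ∃ j, k = j + 1 := ⟨k - 1, by omega⟩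
      have e1 : 2 * (j + 1) - 1 = 2 * j + 1 := by omega
      have e3 : 4 * (j + 1) - 2 = 4 * j + 2 := by omega
      rw [← Int.natCast_dvd_natCast]
      have hcast : (N : ℤ) = 2 ^ (2 * j + 1) - 2 ^ (j + 1) + 1 := by
        rw [hN, e1, Nat.cast_add, Nat.cast_sub (by rw [e1] at hpk; exact hpk)]
        push_cast; ring
      refine ⟨2 ^ (2 * j + 1) + 2 ^ (j + 1) + 1, ?_⟩
      push_cast [e3, hcast]
      ring
    -- N ∣ 2^(2(2^k+1))+1
    have hme : Odd (2 ^ k + 1) := by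
      refine Even.add_one ⟨2 ^ (k - 1), ?_⟩
      rw [← two_mul, ← pow_succ']
      congr 1; omega
    have h5 : 5 ∣ 2 ^ (2 * (2 ^ k + 1)) + 1 := by
      rw [← Int.natCast_dvd_natCast]
      push_cast
      have h4m : (2:ℤ) ^ (2 * (2 ^ k + 1)) = 4 ^ (2 ^ k + 1) := by
        rw [pow_mul]; norm_num
      have hcong : (4:ℤ) ^ (2 ^ k + 1) ≡ (-1) ^ (2 ^ k + 1) [ZMOD 5] :=
        Int.ModEq.pow _ (by decide)
      rw [hme.neg_one_pow] at hcong
      have := hcong.dvd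
      rw [h4m]
      omega
    have hdvd2n : N ∣ 2 ^ (2 * (2 ^ k + 1)) + 1 := by
      have h1 : N ∣ 5 * M := Dvd.dvd.mul_left hMd 5
      rwa [hM, Nat.mul_div_cancel' h5] at h1
    -- ZMod setup
    haveI hf : Fact N.Prime := ⟨hp⟩
    haveI : NeZero N := ⟨hp.pos.ne'⟩
    haveI : Fact (2 < N) := ⟨hN2⟩
    set x : ZMod N := 2 with hxdef
    have hm1 : x ^ (4 * k - 2) = -1 := by
      have h0 : ((2 ^ (4 * k - 2) + 1 : ℕ) : ZMod N) = 0 :=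
        (ZMod.natCast_eq_zero_iff _ _).mpr hdvdAur
      push_cast at h0
      exact eq_neg_of_add_eq_zero_left h0
    have hm2 : x ^ (2 * (2 ^ k + 1)) = -1 := by
      have h0 : ((2 ^ (2 * (2 ^ k + 1)) + 1 : ℕ) : ZMod N) = 0 :=
        (ZMod.natCast_eq_zero_iff _ _).mpr hdvd2n
      push_cast at h0
      exact eq_neg_of_add_eq_zero_left h0
    have hne : (-1 : ZMod N) ≠ 1 := ZMod.neg_one_ne_one
    set d := orderOf x with hd
    have hd1 : d ∣ 4 * (2 * k - 1) := by
      apply orderOf_dvd_of_pow_eq_one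
      rw [show 4 * (2 * k - 1) = (4 * k - 2) * 2 by omega, pow_mul, hm1]
      ring
    have hd1' : ¬ d ∣ 2 * (2 * k - 1) := by
      intro h
      have := orderOf_dvd_iff_pow_eq_one.mp h
      rw [show 2 * (2 * k - 1) = 4 * k - 2 by omega, hm1] at this
      exact hne this
    have hd2 : d ∣ 4 * (2 ^ k + 1) := by
      apply orderOf_dvd_of_pow_eq_one
      rw [show 4 * (2 ^ k + 1) = (2 * (2 ^ k + 1)) * 2 by omega, pow_mul, hm2]
      ring
    have hd2' : ¬ d ∣ 2 * (2 ^ k + 1) := by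
      intro h
      have := orderOf_dvd_iff_pow_eq_one.mp h
      rw [hm2] at this
      exact hne this
    obtain ⟨e, hde, he1⟩ := aux_four d (2 * k - 1) (by omega) hd1 hd1' ⟨k - 1, by omega⟩
    obtain ⟨e', hde', he2⟩ := aux_four d (2 ^ k + 1) (by omega) hd2 hd2' hme
    have hee : e = e' := by omega
    subst hee
    have hdpos : 0 < d := by
      rcases Nat.eq_zero_or_pos d with h | h
      · rw [h, zero_dvd_iff] at hd1; omega
      · exact h
    have hepos : 0 < e := by omega
    have hxe : x ^ (2 * e) = -1 := by
      have hsq : x ^ (2 * e) * x ^ (2 * e) = 1 := by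
        rw [← pow_add, show 2 * e + 2 * e = d by omega]
        exact pow_orderOf_eq_one x
      rcases mul_self_eq_one_iff.mp hsq with h | h
      · have := orderOf_le_of_pow_eq_one (by omega : 0 < 2 * e) h
        omega
      · exact h
    have hNdvd : N ∣ 2 ^ (2 * e) + 1 := by
      apply (ZMod.natCast_eq_zero_iff _ _).mp
      push_cast
      rw [hxe]; ring
    have hNle : N ≤ 2 ^ (2 * e) + 1 := Nat.le_of_dvd (by positivity) hNdvd
    rcases eq_or_ne e (2 * k - 1) with he | he
    · -- e = 2k-1: use order ∣ N-1
      have hx0 : x ≠ 0 := by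
        have hnd2 : ¬ N ∣ 2 := fun h => absurd (Nat.le_of_dvd two_pos h) (by omega)
        intro h0
        apply hnd2
        apply (ZMod.natCast_eq_zero_iff 2 N).mp
        push_cast
        exact h0
      have hdN : d ∣ N - 1 := orderOf_dvd_of_pow_eq_one (ZMod.pow_card_sub_one_eq_one hx0)
      have hmulpow : 2 ^ k * 2 ^ (k - 1) = 2 ^ (2 * k - 1) := by
        rw [← pow_add]; congr 1; omega
      have heq : N - 1 = 2 ^ k * (2 ^ (k - 1) - 1) := by
        rw [Nat.mul_sub, mul_one, hmulpow]
        omega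
      have hdkN : (2 * k - 1) ∣ 2 ^ k * (2 ^ (k - 1) - 1) := by
        rw [← heq]
        exact dvd_trans ⟨4, by omega⟩ hdN
      have hcop : Nat.Coprime (2 * k - 1) (2 ^ k) :=
        (Nat.coprime_two_right.mpr ⟨k - 1, by omega⟩).pow_right k
      have h2k1 : (2 * k - 1) ∣ 2 ^ (k - 1) - 1 := hcop.dvd_of_dvd_mul_left hdkN
      have hpk' : (2:ℕ) ≤ 2 ^ (k - 1) := by
        have : (2:ℕ) ^ 1 ≤ 2 ^ (k - 1) := Nat.pow_le_pow_right (by norm_num) (by omega)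
        simpa using this
      have h2km : 2 * 2 ^ (k - 1) = 2 ^ k := by
        rw [← pow_succ']; congr 1; omega
      have ha : (2 * k - 1) ∣ 2 ^ k - 2 := by
        have h' := h2k1.mul_left 2
        rwa [Nat.mul_sub, mul_one, h2km] at h'
      have hb : (2 * k - 1) ∣ 2 ^ k + 1 := he ▸ he2
      have h3 : (2 * k - 1) ∣ 3 := by
        have h' := Nat.dvd_sub hb ha
        rwa [show 2 ^ k + 1 - (2 ^ k - 2) = 3 by omega] at h'
      have := Nat.le_of_dvd (by norm_num) h3
      omega
    · -- e proper divisor of 2k-1: size contradiction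
      obtain ⟨c, hc⟩ := he1
      have hc0 : c ≠ 0 := by rintro rfl; simp at hc; omega
      have hc1 : c ≠ 1 := by rintro rfl; simp at hc; omega
      have h2e : 2 * e ≤ 2 * k - 2 := by
        have : e * 2 ≤ e * c := Nat.mul_le_mul_left e (by omega)
        omega
      have hb1 : 2 ^ (2 * e) ≤ 2 ^ (2 * k - 2) := Nat.pow_le_pow_right (by norm_num) h2e
      have hb2 : 2 ^ k < 2 ^ (2 * k - 2) := Nat.pow_lt_pow_right (by norm_num) (by omega)
      have hb3 : 2 ^ (2 * k - 1) = 2 * 2 ^ (2 * k - 2) := by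
        rw [← pow_succ']; congr 1; omega
      omega
  · intro _
    have hgcd := Nat.gcd_le_left ((2 ^ (2 * (2 ^ k + 1)) + 1) / 5)
      (show 0 < 2 ^ (2 * k - 1) - 2 ^ k + 1 by omega)
    omega
end

section
/- Let k > 1 and let s be the Yu-Gong sequence of period N = 4(2^{2k} − 1). Then S(2)·T* ≡ 13 (mod 15) if k ≡ 0 (mod 4); S(2)·T* ≡ 0 (mod 15) if k ≡ 1 (mod 4); S(2)·T* ≡ 10 (mod 15) if k ≡ 2 (mod 4); and S(2)·T* ≡ 9 (mod 15) if k ≡ 3 (mod 4). In particular, gcd(S(2)·T*, 2^N − 1) > 1 when k ≡ 1, 2, 3 (mod 4). -/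
/-!
Everything is computed in `ZMod 15`, where `x = 2` and `x = 8 = 2⁻¹` satisfy `x ^ 4 = 1` and
`1 + x + x ^ 2 + x ^ 3 = 0`. For such an `x`, the four interleaved copies of column `j` of `s`
contribute `(2 b_j - 1) x ^ (j + e_j)` to `∑ s_t x ^ t`. The shift sequence is built so that
`j + e_j ≡ 0 (mod 4)`, except at the multiples `j` of `2 ^ k + 1`, where `j + e_j ≡ δ` and `b_j = 0`
because `α ^ j` lies in the subfield of order `2 ^ k`, on which the absolute trace vanishes. As the
m-sequence is balanced, `∑ s_t x ^ t = 1 + (2 ^ k - 1)(1 - x ^ δ)`. Finally `T* ≡ -2 S(2⁻¹)`, and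
`2 ^ δ + 2 ^ (-δ) ≡ 10` for both signs, so `S(2) T* ≡ 2 ^ (2k) - 2 ^ k - 2 (mod 15)`.
-/

open Finset

theorem ZMod.eq_zero_or_eq_one (β : ZMod 2) : β = 0 ∨ β = 1 := by
  revert β; decide

namespace YuGong

theorem sum_range_mul {M : Type*} [AddCommMonoid M] (m n : ℕ) (f : ℕ → M) :
    ∑ t ∈ range (m * n), f t = ∑ i ∈ range m, ∑ j ∈ range n, f (i * n + j) := by
  induction m with
  | zero => simp
  | succ m ih => rw [Nat.succ_mul, sum_range_add, ih, sum_range_succ]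

theorem sum_range_mul_ite_mod_eq_zero {M : Type*} [AddCommMonoid M] (m n : ℕ) (hn : 0 < n)
    (c : M) : ∑ t ∈ range (m * n), (if t % n = 0 then c else 0) = m • c := by
  calc ∑ t ∈ range (m * n), (if t % n = 0 then c else 0)
      = ∑ _i ∈ range m, c := by
        rw [sum_range_mul]
        refine sum_congr rfl fun i _ => ?_
        rw [sum_congr rfl fun j hj => by rw [Nat.mul_comm, Nat.mul_add_mod,
          Nat.mod_eq_of_lt (mem_range.mp hj)], sum_ite_eq' _ 0, if_pos (mem_range.mpr hn)]
    _ = m • c := by rw [sum_const, card_range]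

section FourthRoot

variable {R : Type*} [CommRing R] {x : R}

-- `a = (0, 1, 1, 1)` differs from the constant sequence `1` only at `i ≡ -m (mod 4)`, and
-- `∑ i < 4, x ^ (3 * i) = 0`.
theorem column_sum (hx4 : x ^ 4 = 1) (hx : 1 + x + x ^ 2 + x ^ 3 = 0) (m : ℤ) (β : ZMod 2) :
    ∑ i ∈ range 4,
        (((if ((i : ℤ) + m) % 4 = 0 then 0 else 1) + β : ZMod 2).val : R) * x ^ (3 * i)
      = (2 * β.val - 1) * x ^ (m % 4).toNat := by
  have hm : ∀ i : ℤ, (i + m) % 4 = (i + m % 4) % 4 := fun i => by omega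
  have h4 : m % 4 = 0 ∨ m % 4 = 1 ∨ m % 4 = 2 ∨ m % 4 = 3 := by omega
  have hx6 : x ^ 6 = x ^ 2 := by rw [pow_eq_pow_mod 6 hx4]
  have hx9 : x ^ 9 = x := by rw [pow_eq_pow_mod 9 hx4, pow_one]
  have h11 : (1 + 1 : ZMod 2) = 0 := rfl
  simp only [hm]
  rcases ZMod.eq_zero_or_eq_one β with rfl | rfl <;> rcases h4 with h | h | h | h <;>
    simp [-ZMod.natCast_val, ZMod.val_one, h, sum_range_succ, hx6, hx9, h11] <;>
    first | ring1 | linear_combination hx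

theorem sum_interleave (hx4 : x ^ 4 = 1) (hx : 1 + x + x ^ 2 + x ^ 3 = 0) {W : ℕ} (hW : W % 4 = 3)
    (c : ℕ → ℤ) (β s : ℕ → ZMod 2)
    (hs : ∀ i j : ℕ, i ≤ 3 → j ≤ W - 1 →
      s (i * W + j) = (if ((i : ℤ) + c j) % 4 = 0 then 0 else 1) + β j) :
    ∑ t ∈ range (4 * W), ((s t).val : R) * x ^ t
      = ∑ j ∈ range W, (2 * (β j).val - 1) * x ^ (((j : ℤ) + c j) % 4).toNat := by
  rw [sum_range_mul, sum_comm]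
  refine sum_congr rfl fun j hj => ?_
  have hj : j ≤ W - 1 := by have := mem_range.mp hj; omega
  calc ∑ i ∈ range 4, ((s (i * W + j)).val : R) * x ^ (i * W + j)
      = (∑ i ∈ range 4, (((if ((i : ℤ) + c j) % 4 = 0 then 0 else 1) + β j : ZMod 2).val : R)
          * x ^ (3 * i)) * x ^ j := by
        rw [sum_mul]
        refine sum_congr rfl fun i hi => ?_
        have hi : i ≤ 3 := by have := mem_range.mp hi; omega
        have hiW : i * W % 4 = 3 * i % 4 := by rw [Nat.mul_mod, hW]; omega
        rw [hs i j hi hj, mul_assoc, ← pow_add, pow_eq_pow_mod (i * W + j) hx4,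
          pow_eq_pow_mod (3 * i + j) hx4, show (i * W + j) % 4 = (3 * i + j) % 4 by omega]
    _ = _ := by
        rw [column_sum hx4 hx, mul_assoc, ← pow_add, pow_eq_pow_mod _ hx4]
        congr 2
        omega

theorem sum_range_four_mul_pow_eq_zero (hx : 1 + x + x ^ 2 + x ^ 3 = 0)
    (n : ℕ) : ∑ t ∈ range (4 * n), x ^ t = 0 := by
  rw [Nat.mul_comm, sum_range_mul]
  refine sum_eq_zero fun i _ => ?_
  simp only [pow_add, ← mul_sum, sum_range_succ, sum_range_zero]
  linear_combination x ^ (i * 4) * hx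

theorem neg_one_pow_val (v : ZMod 2) : (-1 : R) ^ v.val = 1 - 2 * v.val := by
  rcases ZMod.eq_zero_or_eq_one v with rfl | rfl <;> norm_num [ZMod.val_one]

theorem sum_neg_one_pow_mul_pow_sub_mod {y : R} {N : ℕ} (hxy : x * y = 1) (hN : x ^ N = 1)
    (hy : ∑ t ∈ range N, y ^ t = 0) (v : ℕ → ZMod 2) :
    ∑ t ∈ range N, (-1 : R) ^ (v t).val * x ^ ((N - t) % N)
      = -2 * ∑ t ∈ range N, ((v t).val : R) * y ^ t := by
  have hpow : ∀ t ∈ range N, x ^ ((N - t) % N) = y ^ t := fun t ht => by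
    have hinv : x ^ ((N - t) % N) * x ^ t = 1 := by
      rcases Nat.eq_zero_or_pos t with rfl | ht0
      · simp
      · rw [Nat.mod_eq_of_lt (by have := mem_range.mp ht; omega), ← pow_add,
          Nat.sub_add_cancel (mem_range.mp ht).le, hN]
    calc x ^ ((N - t) % N) = x ^ ((N - t) % N) * (x * y) ^ t := by rw [hxy, one_pow, mul_one]
      _ = y ^ t := by rw [mul_pow, ← mul_assoc, hinv, one_mul]
  rw [sum_congr rfl fun t ht => by rw [hpow t ht, neg_one_pow_val], mul_sum]
  simp only [sub_mul, one_mul, sum_sub_distrib, hy, zero_sub, ← sum_neg_distrib]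
  exact sum_congr rfl fun t _ => by ring

end FourthRoot

theorem trace_eq_zero_of_pow_eq_self {K L : Type*} [Field K] [Field L] [Finite L] [Algebra K L]
    [CharP L 2] {n : ℕ} (hn : Module.finrank K L = 2 * n) {x : L} (hx : x ^ Nat.card K ^ n = x) :
    Algebra.trace K L x = 0 := by
  apply FaithfulSMul.algebraMap_injective K L
  have hper : ∀ i, x ^ Nat.card K ^ (n + i) = x ^ Nat.card K ^ i := fun i => by
    rw [pow_add, pow_mul, hx]
  rw [FiniteField.algebraMap_trace_eq_sum_pow, hn, two_mul, sum_range_add, map_zero]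
  simp only [hper]
  exact CharTwo.add_self_eq_zero _

theorem two_mul_sum_val_eq_card {G : Type*} [AddGroup G] [Fintype G] (f : G →+ ZMod 2)
    (hf : Function.Surjective f) : 2 * ∑ g, (f g).val = Fintype.card G := by
  obtain ⟨g₁, hg₁⟩ := hf 1
  have hval : ∀ a : ZMod 2, a.val + (a + 1).val = 1 := by decide
  calc 2 * ∑ g, (f g).val = ∑ g, (f g).val + ∑ g, (f (g + g₁)).val := by
        rw [two_mul]
        congr 1
        exact (Equiv.sum_comp (Equiv.addRight g₁) fun g => (f g).val).symm
    _ = Fintype.card G := by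
        simp [← sum_add_distrib, map_add, hg₁, hval]

theorem sum_range_pow_eq_sum {F M : Type*} [Field F] [Fintype F] [AddCommMonoid M] {α : F}
    (hα : orderOf α = Fintype.card F - 1) {f : F → M} (hf : f 0 = 0) :
    ∑ j ∈ range (Fintype.card F - 1), f (α ^ j) = ∑ x, f x := by
  classical
  have hα0 : α ≠ 0 := by
    rintro rfl
    have h := pow_orderOf_eq_one (0 : F)
    rw [hα, zero_pow (by have := Fintype.one_lt_card (α := F); omega)] at h
    exact zero_ne_one h
  have hinj : Set.InjOn (α ^ ·) (range (Fintype.card F - 1)) := fun i hi j hj hij =>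
    pow_injOn_Iio_orderOf (by simpa [hα] using hi) (by simpa [hα] using hj) hij
  have himg : (range (Fintype.card F - 1)).image (α ^ ·) = univ.erase 0 := by
    refine eq_of_subset_of_card_le (fun y hy => ?_) ?_
    · obtain ⟨j, -, rfl⟩ := mem_image.mp hy
      exact mem_erase.mpr ⟨pow_ne_zero _ hα0, mem_univ _⟩
    · rw [card_image_of_injOn hinj, card_range, card_erase_of_mem (mem_univ _), card_univ]
  rw [← sum_image hinj, himg, sum_erase _ hf]

theorem pow_pow_eq_self_of_pow_eq_one {M : Type*} [Monoid M] {α : M} {q : ℕ} (hq : 1 ≤ q)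
    (h : α ^ (q * q - 1) = 1) (i : ℕ) : (α ^ ((q + 1) * i)) ^ q = α ^ ((q + 1) * i) := by
  have hexp : (q + 1) * i * q = (q + 1) * i + (q * q - 1) * i := by
    have : 1 ≤ q * q := Nat.one_le_iff_ne_zero.mpr (by positivity)
    zify [this]; ring
  rw [← pow_mul, hexp, pow_add, pow_mul α (q * q - 1), h, one_pow, mul_one]

section Trace

variable {F : Type*} [Field F] [Fintype F] [Algebra (ZMod 2) F] {α : F}

theorem two_mul_sum_range_trace_pow_val (hα : orderOf α = Fintype.card F - 1) :
    2 * ∑ j ∈ range (Fintype.card F - 1), (Algebra.trace (ZMod 2) F (α ^ j)).val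
      = Fintype.card F := by
  rw [sum_range_pow_eq_sum hα (f := fun x => (Algebra.trace (ZMod 2) F x).val) (by simp)]
  exact two_mul_sum_val_eq_card (Algebra.trace (ZMod 2) F).toAddMonoidHom
    (Algebra.trace_surjective (ZMod 2) F)

theorem trace_pow_eq_zero_of_mod_eq_zero {k : ℕ} (hF : Fintype.card F = 2 ^ (2 * k))
    (hα : orderOf α = 2 ^ (2 * k) - 1) {j : ℕ} (hj : j % (2 ^ k + 1) = 0) :
    Algebra.trace (ZMod 2) F (α ^ j) = 0 := by
  have : CharP F 2 := charP_of_injective_algebraMap (algebraMap (ZMod 2) F).injective 2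
  have hrank : Module.finrank (ZMod 2) F = 2 * k := by
    have h := Module.card_eq_pow_finrank (K := ZMod 2) (V := F)
    rw [hF, ZMod.card] at h
    exact (Nat.pow_right_injective le_rfl h).symm
  obtain ⟨i, rfl⟩ := Nat.dvd_of_mod_eq_zero hj
  refine trace_eq_zero_of_pow_eq_self hrank ?_
  rw [Nat.card_zmod]
  refine pow_pow_eq_self_of_pow_eq_one Nat.one_le_two_pow ?_ i
  rw [← pow_add, ← two_mul, ← hα, pow_orderOf_eq_one]

end Trace

theorem two_pow_mul_two_pow_sub_one (k : ℕ) : 2 ^ (2 * k) - 1 = (2 ^ k - 1) * (2 ^ k + 1) := by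
  rw [Nat.mul_comm 2 k, pow_mul, ← one_pow 2, Nat.sq_sub_sq, one_pow, Nat.mul_comm]

theorem shift_add_emod {k : ℕ} (hk : 1 < k) {δ : ℤ} {e : ℕ → ℤ}
    (he : ∀ i r : ℕ, i ≤ 2 ^ k - 2 → r ≤ 2 ^ k →
      e ((2 ^ k + 1) * i + r) =
        if r = 0 then (3 * (i : ℤ) + δ) % 4 else (3 * ((i : ℤ) + (r : ℤ))) % 4)
    {j : ℕ} (hj : j < 2 ^ (2 * k) - 1) :
    ((j : ℤ) + e j) % 4 = if j % (2 ^ k + 1) = 0 then δ % 4 else 0 := by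
  have h4 : 2 ^ 2 ∣ 2 ^ k := Nat.pow_dvd_pow 2 hk
  have hk4 : 2 ^ 2 ≤ 2 ^ k := Nat.le_of_dvd (by positivity) h4
  have hI : j / (2 ^ k + 1) ≤ 2 ^ k - 2 := by
    have := Nat.div_lt_of_lt_mul
      ((two_pow_mul_two_pow_sub_one k ▸ hj).trans_eq (Nat.mul_comm _ _))
    omega
  have hR : j % (2 ^ k + 1) ≤ 2 ^ k := Nat.lt_succ_iff.mp (Nat.mod_lt j (by omega))
  have hmod : (2 ^ k + 1) * (j / (2 ^ k + 1)) % 4 = j / (2 ^ k + 1) % 4 := by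
    rw [Nat.mul_mod, show (2 ^ k + 1) % 4 = 1 by omega, one_mul, Nat.mod_mod]
  have hdiv := Nat.div_add_mod j (2 ^ k + 1)
  rw [← hdiv, he _ _ hI hR, hdiv]
  split_ifs <;> omega

-- `x ^ (δ % 4).toNat` stands for `x ^ δ`, as `x ^ 4 = 1`.
theorem sum_val_mul_pow_eq {R : Type*} [CommRing R] {x : R} (hx4 : x ^ 4 = 1)
    (hx : 1 + x + x ^ 2 + x ^ 3 = 0) {k : ℕ} (hk : 1 < k) {δ : ℤ} {W : ℕ}
    (hW : W = 2 ^ (2 * k) - 1) {F : Type*} [Field F] [Fintype F] [Algebra (ZMod 2) F]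
    (hF : Fintype.card F = 2 ^ (2 * k)) {α : F} (hα : orderOf α = 2 ^ (2 * k) - 1)
    {b : ℕ → ZMod 2} (hb : ∀ j, b j = Algebra.trace (ZMod 2) F (α ^ j)) {e : ℕ → ℤ}
    (he : ∀ i r : ℕ, i ≤ 2 ^ k - 2 → r ≤ 2 ^ k →
      e ((2 ^ k + 1) * i + r) =
        if r = 0 then (3 * (i : ℤ) + δ) % 4 else (3 * ((i : ℤ) + (r : ℤ))) % 4)
    {s : ℕ → ZMod 2}
    (hs : ∀ i j : ℕ, i ≤ 3 → j ≤ W - 1 →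
      s (i * W + j) = (if ((i : ℤ) + e j) % 4 = 0 then 0 else 1) + b j) :
    ∑ t ∈ range (4 * W), ((s t).val : R) * x ^ t = 1 + (2 ^ k - 1) * (1 - x ^ (δ % 4).toNat) := by
  have hW4 : W % 4 = 3 := by
    have : 2 ^ 2 ∣ 2 ^ (2 * k) := Nat.pow_dvd_pow 2 (by omega)
    have : 0 < 2 ^ (2 * k) := by positivity
    omega
  have hcol : ∀ j ∈ range W, (2 * ((b j).val : R) - 1) * x ^ (((j : ℤ) + e j) % 4).toNat
      = (2 * (b j).val - 1) + if j % (2 ^ k + 1) = 0 then 1 - x ^ (δ % 4).toNat else 0 := by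
    intro j hj
    rw [shift_add_emod hk he (hW ▸ mem_range.mp hj)]
    split_ifs with h
    · rw [hb, trace_pow_eq_zero_of_mod_eq_zero hF hα h, ZMod.val_zero]
      ring
    · simp
  have hbal : ∑ j ∈ range W, (2 * ((b j).val : R) - 1) = 1 := by
    have h := two_mul_sum_range_trace_pow_val (hF ▸ hα)
    rw [hF, ← hW, ← sum_congr rfl fun j _ => congrArg ZMod.val (hb j)] at h
    rw [show 2 ^ (2 * k) = W + 1 by omega] at h
    have h' := congrArg (Nat.cast : ℕ → R) h
    simp only [Nat.cast_mul, Nat.cast_sum, Nat.cast_ofNat, Nat.cast_add, Nat.cast_one] at h'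
    rw [sum_sub_distrib, ← mul_sum, sum_const, card_range, nsmul_one, h']
    ring
  rw [sum_interleave hx4 hx hW4 e b s hs, sum_congr rfl hcol, sum_add_distrib, hbal, hW,
    two_pow_mul_two_pow_sub_one, sum_range_mul_ite_mod_eq_zero _ _ (by positivity), nsmul_eq_mul,
    Nat.cast_sub Nat.one_le_two_pow]
  push_cast
  ring

theorem product_mod_fifteen (y : ZMod 15) {d : ℕ} (hd : d = 1 ∨ d = 3) :
    (1 + (y - 1) * (1 - 2 ^ d)) * (-2 * (1 + (y - 1) * (1 - 8 ^ d))) = y ^ 2 - y - 2 := by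
  have h15 : (15 : ZMod 15) = 0 := rfl
  have hinv : (2 : ZMod 15) ^ d * 8 ^ d = 1 := by
    rw [← mul_pow, show (2 * 8 : ZMod 15) = 1 from rfl, one_pow]
  have hsum : (2 : ZMod 15) ^ d + 8 ^ d = 10 := by rcases hd with rfl | rfl <;> rfl
  linear_combination (-2 * (y - 1) ^ 2) * hinv + (2 * (y - 1) + 2 * (y - 1) ^ 2) * hsum
    + (y ^ 2 - y) * h15

theorem modEq_fifteen_of_cast_eq {a : ℤ} {k : ℕ}
    (ha : (a : ZMod 15) = (2 ^ (k % 4)) ^ 2 - 2 ^ (k % 4) - 2) :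
    (k % 4 = 0 → a ≡ 13 [ZMOD 15]) ∧ (k % 4 = 1 → a ≡ 0 [ZMOD 15]) ∧
      (k % 4 = 2 → a ≡ 10 [ZMOD 15]) ∧ (k % 4 = 3 → a ≡ 9 [ZMOD 15]) := by
  have hcong : ∀ c : ℤ, ((2 : ZMod 15) ^ (k % 4)) ^ 2 - 2 ^ (k % 4) - 2 = c →
      a ≡ c [ZMOD 15] := fun c hc =>
    (ZMod.intCast_eq_intCast_iff _ _ 15).1 (ha.trans hc)
  refine ⟨fun h => hcong 13 ?_, fun h => hcong 0 ?_, fun h => hcong 10 ?_, fun h => hcong 9 ?_⟩ <;>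
    rw [h] <;> rfl

theorem one_lt_gcd_two_pow_sub_one {a : ℤ} {N p : ℕ} (hN : 4 ∣ N) (hN0 : N ≠ 0) (hp : 1 < p)
    (hp15 : p ∣ 15) (ha : (p : ℤ) ∣ a) : 1 < Int.gcd a (2 ^ N - 1) := by
  obtain ⟨W, rfl⟩ := hN
  have h15 : (15 : ℤ) ∣ 2 ^ (4 * W) - 1 := by
    simpa [pow_mul] using sub_dvd_pow_sub_pow (16 : ℤ) 1 W
  have hne : (2 : ℤ) ^ (4 * W) - 1 ≠ 0 := sub_ne_zero.mpr (one_lt_pow₀ (by norm_num) hN0).ne'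
  have hpgcd : (p : ℤ) ∣ (Int.gcd a (2 ^ (4 * W) - 1) : ℤ) :=
    Int.dvd_coe_gcd ha ((Int.natCast_dvd_natCast.mpr hp15).trans h15)
  exact hp.trans_le (Nat.le_of_dvd (Int.gcd_pos_of_ne_zero_right a hne)
    (Int.natCast_dvd_natCast.mp hpgcd))

end YuGong

open YuGong

theorem stmt10
    (k : ℕ) (hk : 1 < k)
    (δ : ℤ) (hδ : δ = 1 ∨ δ = -1)
    (W N : ℕ) (hW : W = 2 ^ (2 * k) - 1) (hN : N = 4 * W)
    (F : Type) [Field F] [Fintype F] [Algebra (ZMod 2) F]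
    (hF : Fintype.card F = 2 ^ (2 * k))
    (α : F) (hα : orderOf α = 2 ^ (2 * k) - 1)
    (b : ℕ → ZMod 2) (hb : ∀ j, b j = Algebra.trace (ZMod 2) F (α ^ j))
    (e : ℕ → ℤ)
    (he : ∀ i r : ℕ, i ≤ 2 ^ k - 2 → r ≤ 2 ^ k →
      e ((2 ^ k + 1) * i + r) =
        if r = 0 then (3 * (i : ℤ) + δ) % 4 else (3 * ((i : ℤ) + (r : ℤ))) % 4)
    (s : ℕ → ZMod 2)
    (hs : ∀ i j : ℕ, i ≤ 3 → j ≤ W - 1 →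
      s (i * W + j) = (if ((i : ℤ) + e j) % 4 = 0 then 0 else 1) + b j)
    (S2 T2 : ℤ)
    (hS2 : S2 = ∑ t ∈ Finset.range N, ((s t).val : ℤ) * 2 ^ t)
    (hT2 : T2 = ∑ t ∈ Finset.range N, (-1 : ℤ) ^ (s t).val * 2 ^ ((N - t) % N))
    :
    (k % 4 = 0 → Int.ModEq 15 (S2 * T2) 13) ∧
    (k % 4 = 1 → Int.ModEq 15 (S2 * T2) 0) ∧
    (k % 4 = 2 → Int.ModEq 15 (S2 * T2) 10) ∧
    (k % 4 = 3 → Int.ModEq 15 (S2 * T2) 9) ∧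
    (k % 4 = 1 ∨ k % 4 = 2 ∨ k % 4 = 3 → 1 < Int.gcd (S2 * T2) (2 ^ N - 1)) := by
  have h16 : (2 : ZMod 15) ^ 4 = 1 := rfl
  have hS : (S2 : ZMod 15) = 1 + (2 ^ k - 1) * (1 - 2 ^ (δ % 4).toNat) := by
    rw [hS2, hN]
    push_cast
    exact sum_val_mul_pow_eq h16 rfl hk hW hF hα hb he hs
  have hT : (T2 : ZMod 15) = -2 * (1 + (2 ^ k - 1) * (1 - 8 ^ (δ % 4).toNat)) := by
    rw [hT2]
    push_cast
    rw [sum_neg_one_pow_mul_pow_sub_mod (y := 8) rfl (by rw [hN, pow_mul, h16, one_pow])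
      (hN ▸ sum_range_four_mul_pow_eq_zero rfl W), hN,
      sum_val_mul_pow_eq rfl rfl hk hW hF hα hb he hs]
  have hST : ((S2 * T2 : ℤ) : ZMod 15) = (2 ^ (k % 4)) ^ 2 - 2 ^ (k % 4) - 2 := by
    rw [Int.cast_mul, hS, hT, product_mod_fifteen _ (by omega), pow_eq_pow_mod k h16]
  obtain ⟨h0, h1, h2, h3⟩ := modEq_fifteen_of_cast_eq hST
  refine ⟨h0, h1, h2, h3, fun hcase => ?_⟩
  obtain ⟨p, hp, hp15, hpST⟩ : ∃ p : ℕ, 1 < p ∧ p ∣ 15 ∧ (p : ℤ) ∣ S2 * T2 := by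
    rcases hcase with h | h | h
    · exact ⟨3, by norm_num, by norm_num, by have := (h1 h).dvd; omega⟩
    · exact ⟨5, by norm_num, by norm_num, by have := (h2 h).dvd; omega⟩
    · exact ⟨3, by norm_num, by norm_num, by have := (h3 h).dvd; omega⟩
  have hN0 : N ≠ 0 := by
    have := Nat.one_lt_two_pow (n := 2 * k) (by omega)
    omega
  exact one_lt_gcd_two_pow_sub_one ⟨W, hN⟩ hN0 hp hp15 hpST
end

section
/- Let k ≥ 2 be an even integer. Then gcd(2^{2^{2k−1} − 2^k} − 1, 2^{2(2^k+1)} + 1) = 5. -/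
lemma aux_dvd_gcd_pow (d a b : ℕ) (hd : 0 < d) (ha : d ∣ 2 ^ a - 1) (hb : d ∣ 2 ^ b - 1) :
    d ∣ 2 ^ (Nat.gcd a b) - 1 := by
  haveI : NeZero d := ⟨hd.ne'⟩
  have cast1 : ((2 ^ a - 1 : ℕ) : ZMod d) = 0 := (ZMod.natCast_eq_zero_iff _ _).mpr ha
  have cast2 : ((2 ^ b - 1 : ℕ) : ZMod d) = 0 := (ZMod.natCast_eq_zero_iff _ _).mpr hb
  rw [Nat.cast_sub (Nat.one_le_two_pow), Nat.cast_pow, Nat.cast_ofNat, Nat.cast_one,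
    sub_eq_zero] at cast1 cast2
  have h1 : orderOf (2 : ZMod d) ∣ a := orderOf_dvd_of_pow_eq_one cast1
  have h2 : orderOf (2 : ZMod d) ∣ b := orderOf_dvd_of_pow_eq_one cast2
  have hg : (2 : ZMod d) ^ (Nat.gcd a b) = 1 :=
    orderOf_dvd_iff_pow_eq_one.mp (Nat.dvd_gcd h1 h2)
  rw [← ZMod.natCast_eq_zero_iff, Nat.cast_sub (Nat.one_le_two_pow), Nat.cast_pow,
    Nat.cast_ofNat, Nat.cast_one, sub_eq_zero, hg]

theorem stmt18 (k : ℕ) (hk : 2 ≤ k) (hke : Even k) :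
    Nat.gcd (2 ^ (2 ^ (2 * k - 1) - 2 ^ k) - 1) (2 ^ (2 * (2 ^ k + 1)) + 1) = 5 := by
  obtain ⟨r, hr⟩ := hke
  have hr1 : 1 ≤ r := by omega
  set a := 2 ^ (2 * k - 1) - 2 ^ k with ha
  set b := 2 * (2 ^ k + 1) with hb
  set d := Nat.gcd (2 ^ a - 1) (2 ^ b + 1) with hd
  set m := 2 ^ (k - 1) - 1 with hm
  set n := 2 ^ k + 1 with hn
  have hk1 : 1 ≤ 2 ^ (k - 1) := Nat.one_le_two_pow
  have hkk : 2 ^ k = 2 * 2 ^ (k - 1) := by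
    rw [← pow_succ']
    congr 1
    omega
  have hkk2 : 2 ^ k = 4 * 2 ^ (k - 2) := by
    rw [show (4:ℕ) = 2 ^ 2 by norm_num, ← pow_add]
    congr 1
    omega
  -- a = 2^k * m
  have haeq : a = 2 ^ k * m := by
    have h1 : 2 * k - 1 = k + (k - 1) := by omega
    rw [ha, h1, pow_add, hm, Nat.mul_sub, mul_one]
  -- gcd a (2*b) = 4
  have hmn : Nat.gcd m n = 1 := by
    have hn2 : n = 3 + 2 * m := by rw [hn, hm, hkk]; omega
    rw [hn2, Nat.gcd_add_mul_right_right]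
    have hk3 : k - 1 = 2 * (r - 1) + 1 := by omega
    have h3 : (3 : ℕ) ∣ 4 ^ (r - 1) - 1 := by
      have := Nat.sub_dvd_pow_sub_pow 4 1 (r - 1)
      simpa using this
    have h4 : 1 ≤ (4 : ℕ) ^ (r - 1) := Nat.one_le_pow _ _ (by norm_num)
    have hm3 : m % 3 = 1 := by
      have : m = 2 * 4 ^ (r - 1) - 1 := by
        rw [hm, hk3, pow_succ', pow_mul]; norm_num
      omega
    rw [Nat.gcd_comm, Nat.gcd_rec, hm3]
    decide
  have hnodd : n % 2 = 1 := by
    rw [hn, hkk]; omega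
  have hcop2n : Nat.Coprime (2 ^ (k - 2)) n := by
    apply Nat.Coprime.pow_left
    rw [Nat.Coprime, Nat.gcd_rec, hnodd]
    decide
  have hgcd4 : Nat.gcd a (2 * b) = 4 := by
    have h2b : 2 * b = 4 * n := by rw [hb, hn]; ring
    rw [haeq, hkk2, h2b, mul_assoc, Nat.gcd_mul_left, hcop2n.gcd_mul_left_cancel, hmn]
  -- 5 ∣ 2^a - 1
  have h15 : (15 : ℕ) ∣ 2 ^ a - 1 := by
    have h4a : a = 4 * (2 ^ (k - 2) * m) := by rw [haeq, hkk2]; ring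
    rw [h4a, pow_mul]
    have := Nat.sub_dvd_pow_sub_pow (2 ^ 4) 1 (2 ^ (k - 2) * m)
    simpa using this
  have h5a : (5 : ℕ) ∣ 2 ^ a - 1 := dvd_trans (by norm_num) h15
  -- 2^b = 4 * 16^(2^(k-1))
  have hbeq : 2 ^ b = 4 * 16 ^ (2 ^ (k - 1)) := by
    have hb4 : b = 4 * 2 ^ (k - 1) + 2 := by rw [hb, hn, hkk]; ring
    rw [hb4, pow_add, pow_mul]
    norm_num
    ring
  have h16 : (15 : ℕ) ∣ 16 ^ (2 ^ (k - 1)) - 1 := by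
    have := Nat.sub_dvd_pow_sub_pow 16 1 (2 ^ (k - 1))
    simpa using this
  have h16pos : 1 ≤ (16 : ℕ) ^ (2 ^ (k - 1)) := Nat.one_le_pow _ _ (by norm_num)
  have h5b : (5 : ℕ) ∣ 2 ^ b + 1 := by rw [hbeq]; omega
  have h3b : ¬ (3 : ℕ) ∣ 2 ^ b + 1 := by rw [hbeq]; omega
  -- d ∣ 15
  have hdpos : 0 < d := Nat.gcd_pos_of_pos_right _ (by positivity)
  have hdvd2b : d ∣ 2 ^ (2 * b) - 1 := by
    have hfac : (2 ^ b + 1) ∣ 2 ^ (2 * b) - 1 := by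
      obtain ⟨x, hx⟩ : ∃ x, 2 ^ b = x + 1 := ⟨2 ^ b - 1, by have := Nat.one_le_two_pow (n := b); omega⟩
      refine ⟨x, ?_⟩
      have h1 : 2 ^ (2 * b) = (x + 1) ^ 2 := by rw [mul_comm, pow_mul, hx]
      have h2 : (x + 1) ^ 2 = (x + 1 + 1) * x + 1 := by ring
      rw [h1, hx]
      omega
    exact dvd_trans (Nat.gcd_dvd_right _ _) hfac
  have hd15 : d ∣ 15 := by
    have := aux_dvd_gcd_pow d a (2 * b) hdpos (Nat.gcd_dvd_left _ _) hdvd2b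
    rwa [hgcd4] at this
  have hd5 : (5 : ℕ) ∣ d := Nat.dvd_gcd h5a h5b
  have hd3 : ¬ (3 : ℕ) ∣ d := fun h => h3b (h.trans (Nat.gcd_dvd_right _ _))
  have hdle : d ≤ 15 := Nat.le_of_dvd (by norm_num) hd15
  interval_cases d <;> omega
end
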